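/- Let p ∈ [1,∞), p ≠ 2, and let U : ℓ^p(X) → ℓ^p(Y) be a surjective linear isometry between ℓ^p spaces of countable sets X and Y. Then for every x ∈ X there exists a unique y ∈ Y such that U δ_x is supported at y, and the map x ↦ y is a bijection X → Y with |(U δ_x)(y)| = 1. -/

import Mathlib

open scoped ENNReal

/-- A map between (pseudo)metric spaces is uniformly expansive if points at distance at most `R`
are sent to points at distance at most `S = S(R)`. -/
def UniformlyExpansive {X Y : Type*} [PseudoMetricSpace X] [PseudoMetricSpace Y]
    (f : X → Y) : Prop :=
  ∀ R : ℝ, 0 < R → ∃ S : ℝ, 0 < S ∧ ∀ x₁ x₂ : X, dist x₁ x₂ ≤ R → dist (f x₁) (f x₂) ≤ S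

/-- Two maps are close if they are at uniformly bounded distance. -/
def Close {X Y : Type*} [PseudoMetricSpace Y] (f g : X → Y) : Prop :=
  ∃ C : ℝ, 0 < C ∧ ∀ x : X, dist (f x) (g x) ≤ C

/-- `f : X → Y` is a coarse equivalence if it is uniformly expansive and admits a uniformly
expansive coarse inverse. -/
def IsCoarseEquivalence {X Y : Type*} [PseudoMetricSpace X] [PseudoMetricSpace Y]
    (f : X → Y) : Prop :=
  UniformlyExpansive f ∧
    ∃ g : Y → X, UniformlyExpansive g ∧ Close (f ∘ g) id ∧ Close (g ∘ f) id

/-- A metric space has bounded geometry if balls of radius `R` have uniformly bounded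
cardinality. -/
def BoundedGeometry (X : Type*) [PseudoMetricSpace X] : Prop :=
  ∀ R : ℝ, 0 ≤ R → ∃ N : ℕ, ∀ x : X,
    (Metric.closedBall x R).Finite ∧ (Metric.closedBall x R).ncard ≤ N

/-- The standard basis vector `δ_x` of `ℓ^p(X)`. -/
noncomputable def delta {X : Type*} (p : ℝ≥0∞) (x : X) : lp (fun _ : X => ℂ) p :=
  letI := Classical.decEq X
  lp.single p x 1

/-- The matrix coefficient `T_{xy} = (T δ_y)(x)` of a bounded operator on `ℓ^p`. -/
noncomputable def matCoef {X Y : Type*} (p : ℝ≥0∞) [Fact (1 ≤ p)]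
    (T : lp (fun _ : X => ℂ) p →L[ℂ] lp (fun _ : Y => ℂ) p) (y : Y) (x : X) : ℂ :=
  T (delta p x) y

/-- `T` has propagation at most `R`. -/
def HasPropagationLE {X : Type*} [PseudoMetricSpace X] (p : ℝ≥0∞) [Fact (1 ≤ p)]
    (T : lp (fun _ : X => ℂ) p →L[ℂ] lp (fun _ : X => ℂ) p) (R : ℝ) : Prop :=
  ∀ x y : X, matCoef p T x y ≠ 0 → dist x y ≤ R

/-- `T` has finite propagation. -/
def FiniteProp {X : Type*} [PseudoMetricSpace X] (p : ℝ≥0∞) [Fact (1 ≤ p)]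
    (T : lp (fun _ : X => ℂ) p →L[ℂ] lp (fun _ : X => ℂ) p) : Prop :=
  ∃ R : ℝ, 0 ≤ R ∧ HasPropagationLE p T R

/-- The `ℓ^p` uniform Roe algebra of `X`, as the operator-norm closure of the set of
finite propagation bounded operators on `ℓ^p(X)`. -/
noncomputable def RoeAlgSet (X : Type*) [PseudoMetricSpace X] (p : ℝ≥0∞) [Fact (1 ≤ p)] :
    Set (lp (fun _ : X => ℂ) p →L[ℂ] lp (fun _ : X => ℂ) p) :=
  closure {T | FiniteProp p T}

section scalars

-- B1: real version of (u+v)^r ≤ 2^(r-1) (u^r+v^r), r ≥ 1, u v ≥ 0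
lemma B1 {r : ℝ} (hr : 1 ≤ r) {u v : ℝ} (hu : 0 ≤ u) (hv : 0 ≤ v) :
    (u + v) ^ r ≤ 2 ^ (r - 1) * (u ^ r + v ^ r) := by
  have h := NNReal.rpow_add_le_mul_rpow_add_rpow ⟨u, hu⟩ ⟨v, hv⟩ hr
  have := NNReal.coe_le_coe.mpr h
  push_cast at this
  convert this using 3 <;> norm_num <;> rfl

-- B2: u^r + v^r ≤ 2^(1-r) (u+v)^r for 0 < r ≤ 1
lemma B2 {r : ℝ} (hr0 : 0 < r) (hr : r ≤ 1) {u v : ℝ} (hu : 0 ≤ u) (hv : 0 ≤ v) :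
    u ^ r + v ^ r ≤ 2 ^ (1 - r) * (u + v) ^ r := by
  have hinv : 1 ≤ r⁻¹ := by simpa [one_div] using (one_le_div hr0).mpr hr
  have h := B1 hinv (Real.rpow_nonneg hu r) (Real.rpow_nonneg hv r)
  rw [Real.rpow_rpow_inv hu hr0.ne', Real.rpow_rpow_inv hv hr0.ne'] at h
  have hsum : (0:ℝ) ≤ u ^ r + v ^ r := by positivity
  have h2 : ((u ^ r + v ^ r) ^ r⁻¹) ^ r ≤ (2 ^ (r⁻¹ - 1) * (u + v)) ^ r := by
    apply Real.rpow_le_rpow (Real.rpow_nonneg hsum _) h hr0.le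
  rw [Real.rpow_inv_rpow hsum hr0.ne', Real.mul_rpow (by positivity) (by positivity),
    ← Real.rpow_mul (by norm_num : (0:ℝ) ≤ 2)] at h2
  have heq : (r⁻¹ - 1) * r = 1 - r := by field_simp
  rwa [heq] at h2

lemma C1' {r : ℝ} (hr0 : 0 ≤ r) (hr : r ≤ 1) {u v : ℝ} (hu : 0 ≤ u) (hv : 0 ≤ v) :
    (u + v) ^ r ≤ u ^ r + v ^ r := by
  have h := NNReal.rpow_add_le_add_rpow ⟨u, hu⟩ ⟨v, hv⟩ hr0 hr
  have := NNReal.coe_le_coe.mpr h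
  push_cast at this
  convert this using 2 <;> rfl

lemma C2' {r : ℝ} (hr : 1 ≤ r) {u v : ℝ} (hu : 0 ≤ u) (hv : 0 ≤ v) :
    u ^ r + v ^ r ≤ (u + v) ^ r := by
  have h := NNReal.add_rpow_le_rpow_add ⟨u, hu⟩ ⟨v, hv⟩ hr
  have := NNReal.coe_le_coe.mpr h
  push_cast at this
  convert this using 2 <;> rfl

lemma C1 {r : ℝ} (hr0 : 0 < r) (hr : r < 1) {u v : ℝ} (hu : 0 < u) (hv : 0 < v) :
    (u + v) ^ r < u ^ r + v ^ r := by
  have key : (u + v) ^ r = u * (u + v) ^ (r - 1) + v * (u + v) ^ (r - 1) := by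
    rw [← add_mul, ← Real.rpow_one_add' (by positivity) (by intro h; linarith [h] )]
    · ring_nf
  rw [key]
  have h1 : u * (u + v) ^ (r - 1) < u * u ^ (r - 1) := by
    apply mul_lt_mul_of_pos_left _ hu
    exact Real.rpow_lt_rpow_of_neg hu (by linarith) (by linarith)
  have h2 : v * (u + v) ^ (r - 1) < v * v ^ (r - 1) := by
    apply mul_lt_mul_of_pos_left _ hv
    exact Real.rpow_lt_rpow_of_neg hv (by linarith) (by linarith)
  have eu : u * u ^ (r - 1) = u ^ r := by
    rw [← Real.rpow_one_add' hu.le (by intro h; linarith [h])]; ring_nf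
  have ev : v * v ^ (r - 1) = v ^ r := by
    rw [← Real.rpow_one_add' hv.le (by intro h; linarith [h])]; ring_nf
  linarith

lemma C2 {r : ℝ} (hr : 1 < r) {u v : ℝ} (hu : 0 < u) (hv : 0 < v) :
    u ^ r + v ^ r < (u + v) ^ r := by
  have key : (u + v) ^ r = u * (u + v) ^ (r - 1) + v * (u + v) ^ (r - 1) := by
    rw [← add_mul, ← Real.rpow_one_add' (by positivity) (by intro h; linarith [h])]
    ring_nf
  rw [key]
  have h1 : u * u ^ (r - 1) < u * (u + v) ^ (r - 1) := by
    apply mul_lt_mul_of_pos_left _ hu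
    exact Real.rpow_lt_rpow hu.le (by linarith) (by linarith)
  have h2 : v * v ^ (r - 1) < v * (u + v) ^ (r - 1) := by
    apply mul_lt_mul_of_pos_left _ hv
    exact Real.rpow_lt_rpow hv.le (by linarith) (by linarith)
  have eu : u * u ^ (r - 1) = u ^ r := by
    rw [← Real.rpow_one_add' hu.le (by intro h; linarith [h])]; ring_nf
  have ev : v * v ^ (r - 1) = v ^ r := by
    rw [← Real.rpow_one_add' hv.le (by intro h; linarith [h])]; ring_nf
  linarith

-- square as rpow
lemma sq_rpow (x : ℝ) (hx : 0 ≤ x) : x * x = x ^ (2:ℝ) := by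
  rw [show ((2:ℝ)) = ((2:ℕ):ℝ) by norm_num, Real.rpow_natCast]; ring

lemma para (a b : ℂ) : ‖a+b‖ ^ (2:ℝ) + ‖a-b‖ ^ (2:ℝ) = 2 * (‖a‖ ^ (2:ℝ) + ‖b‖ ^ (2:ℝ)) := by
  have := parallelogram_law_with_norm ℂ a b
  rw [Real.rpow_two, Real.rpow_two, Real.rpow_two, Real.rpow_two]
  linarith

lemma rpow_half (x : ℝ) (hx : 0 ≤ x) (q : ℝ) : (x ^ (2:ℝ)) ^ (q/2) = x ^ q := by
  rw [← Real.rpow_mul hx]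
  congr 1
  ring

-- the middle quantity bound, q ≤ 2
lemma mid_le {q : ℝ} (hq0 : 0 < q) (hq2 : q ≤ 2) (a b : ℂ) :
    ‖a+b‖ ^ q + ‖a-b‖ ^ q ≤ 2 * (‖a‖ ^ (2:ℝ) + ‖b‖ ^ (2:ℝ)) ^ (q/2) := by
  have hr0 : 0 < q/2 := by linarith
  have hr1 : q/2 ≤ 1 := by linarith
  calc ‖a+b‖ ^ q + ‖a-b‖ ^ q
      = (‖a+b‖ ^ (2:ℝ)) ^ (q/2) + (‖a-b‖ ^ (2:ℝ)) ^ (q/2) := by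
        rw [rpow_half _ (norm_nonneg _), rpow_half _ (norm_nonneg _)]
    _ ≤ 2 ^ (1 - q/2) * (‖a+b‖ ^ (2:ℝ) + ‖a-b‖ ^ (2:ℝ)) ^ (q/2) :=
        B2 hr0 hr1 (by positivity) (by positivity)
    _ = 2 * (‖a‖ ^ (2:ℝ) + ‖b‖ ^ (2:ℝ)) ^ (q/2) := by
        rw [para, Real.mul_rpow (by norm_num) (by positivity), ← mul_assoc,
          show ((2:ℝ)) ^ (q/2) = 2 ^ ((q:ℝ)/2) from rfl,
          ← Real.rpow_add (by norm_num : (0:ℝ) < 2)]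
        norm_num

-- the middle quantity bound, q ≥ 2
lemma mid_ge {q : ℝ} (hq2 : 2 ≤ q) (a b : ℂ) :
    2 * (‖a‖ ^ (2:ℝ) + ‖b‖ ^ (2:ℝ)) ^ (q/2) ≤ ‖a+b‖ ^ q + ‖a-b‖ ^ q := by
  have hr1 : 1 ≤ q/2 := by linarith
  have h := B1 hr1 (u := ‖a+b‖ ^ (2:ℝ)) (v := ‖a-b‖ ^ (2:ℝ)) (by positivity) (by positivity)
  rw [para, rpow_half _ (norm_nonneg _), rpow_half _ (norm_nonneg _),
    Real.mul_rpow (by norm_num) (by positivity)] at h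
  have h2 : (2:ℝ) ^ (q/2 - 1) * 2 = 2 ^ (q/2) := by
    rw [← Real.rpow_add_one (by norm_num : (2:ℝ) ≠ 0)]
    norm_num
  rw [← h2, mul_assoc] at h
  have h3 := (mul_le_mul_iff_right₀ (by positivity : (0:ℝ) < 2 ^ (q/2 - 1))).mp h
  linarith

lemma lamperti_le {q : ℝ} (hq0 : 0 < q) (hq2 : q ≤ 2) (a b : ℂ) :
    ‖a+b‖ ^ q + ‖a-b‖ ^ q ≤ 2 * (‖a‖ ^ q + ‖b‖ ^ q) := by
  refine le_trans (mid_le hq0 hq2 a b) ?_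
  have := C1' (by positivity : (0:ℝ) ≤ q/2) (by linarith) (u := ‖a‖ ^ (2:ℝ))
    (v := ‖b‖ ^ (2:ℝ)) (by positivity) (by positivity)
  rw [rpow_half _ (norm_nonneg _), rpow_half _ (norm_nonneg _)] at this
  linarith

lemma lamperti_lt {q : ℝ} (hq0 : 0 < q) (hq2 : q < 2) {a b : ℂ} (ha : a ≠ 0) (hb : b ≠ 0) :
    ‖a+b‖ ^ q + ‖a-b‖ ^ q < 2 * (‖a‖ ^ q + ‖b‖ ^ q) := by
  refine lt_of_le_of_lt (mid_le hq0 hq2.le a b) ?_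
  have := C1 (by positivity : (0:ℝ) < q/2) (by linarith) (u := ‖a‖ ^ (2:ℝ))
    (v := ‖b‖ ^ (2:ℝ)) (Real.rpow_pos_of_pos (norm_pos_iff.mpr ha) _)
    (Real.rpow_pos_of_pos (norm_pos_iff.mpr hb) _)
  rw [rpow_half _ (norm_nonneg _), rpow_half _ (norm_nonneg _)] at this
  linarith

lemma lamperti_ge {q : ℝ} (hq2 : 2 ≤ q) (a b : ℂ) :
    2 * (‖a‖ ^ q + ‖b‖ ^ q) ≤ ‖a+b‖ ^ q + ‖a-b‖ ^ q := by
  refine le_trans ?_ (mid_ge hq2 a b)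
  have := C2' (by linarith : (1:ℝ) ≤ q/2) (u := ‖a‖ ^ (2:ℝ))
    (v := ‖b‖ ^ (2:ℝ)) (by positivity) (by positivity)
  rw [rpow_half _ (norm_nonneg _), rpow_half _ (norm_nonneg _)] at this
  linarith

lemma lamperti_gt {q : ℝ} (hq2 : 2 < q) {a b : ℂ} (ha : a ≠ 0) (hb : b ≠ 0) :
    2 * (‖a‖ ^ q + ‖b‖ ^ q) < ‖a+b‖ ^ q + ‖a-b‖ ^ q := by
  refine lt_of_lt_of_le ?_ (mid_ge hq2.le a b)
  have := C2 (by linarith : (1:ℝ) < q/2) (u := ‖a‖ ^ (2:ℝ))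
    (v := ‖b‖ ^ (2:ℝ)) (Real.rpow_pos_of_pos (norm_pos_iff.mpr ha) _)
    (Real.rpow_pos_of_pos (norm_pos_iff.mpr hb) _)
  rw [rpow_half _ (norm_nonneg _), rpow_half _ (norm_nonneg _)] at this
  linarith

end scalars

section lplemmas

variable {Z : Type*} {p : ℝ≥0∞} [Fact (1 ≤ p)]

lemma hq0' (hp : p ≠ ∞) : 0 < p.toReal :=
  ENNReal.toReal_pos (ne_of_gt (lt_of_lt_of_le zero_lt_one (Fact.out : 1 ≤ p))) hp

lemma hq2' (hp : p ≠ ∞) (hp2 : p ≠ 2) : p.toReal ≠ 2 := by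
  intro h
  apply hp2
  have : p.toReal = (2 : ℝ≥0∞).toReal := by rw [h]; simp
  exact (ENNReal.toReal_eq_toReal_iff' hp (by norm_num)).mp this

lemma delta_apply_self_aux (p : ℝ≥0∞) (x : Z) : (delta p x : ∀ _ : Z, ℂ) x = 1 := by
  letI := Classical.decEq Z
  simp only [delta]
  exact lp.single_apply_self p x 1

lemma delta_apply_ne_aux (p : ℝ≥0∞) {x i : Z} (h : i ≠ x) : (delta p x : ∀ _ : Z, ℂ) i = 0 := by
  letI := Classical.decEq Z
  simp only [delta]
  exact lp.single_apply_ne p x 1 h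

lemma norm_delta (hp : p ≠ ∞) (x : Z) : ‖delta p x‖ = 1 := by
  letI := Classical.decEq Z
  simp only [delta]
  simpa using lp.norm_single (E := fun _ : Z => ℂ) (lt_of_lt_of_le zero_lt_one (Fact.out : 1 ≤ p)) x (1 : ℂ)

/-- The key norm characterization of disjoint supports. -/
lemma disjoint_iff_norm (hp : p ≠ ∞) (hp2 : p ≠ 2) (f g : lp (fun _ : Z => ℂ) p) :
    (‖f + g‖ ^ p.toReal + ‖f - g‖ ^ p.toReal
      = 2 * ‖f‖ ^ p.toReal + 2 * ‖g‖ ^ p.toReal)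
    ↔ ∀ i, (f : ∀ _ : Z, ℂ) i = 0 ∨ (g : ∀ _ : Z, ℂ) i = 0 := by
  have hq0 : 0 < p.toReal := hq0' hp
  have hq2 : p.toReal ≠ 2 := hq2' hp hp2
  set q := p.toReal with hq
  have Sf : Summable (fun i => ‖(f : ∀ _ : Z, ℂ) i‖ ^ q) := (lp.memℓp f).summable hq0
  have Sg : Summable (fun i => ‖(g : ∀ _ : Z, ℂ) i‖ ^ q) := (lp.memℓp g).summable hq0
  have Sfg : Summable (fun i => ‖(f : ∀ _ : Z, ℂ) i + (g : ∀ _ : Z, ℂ) i‖ ^ q) := by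
    simpa using (lp.memℓp (f + g)).summable hq0
  have Sfg' : Summable (fun i => ‖(f : ∀ _ : Z, ℂ) i - (g : ∀ _ : Z, ℂ) i‖ ^ q) := by
    simpa using (lp.memℓp (f - g)).summable hq0
  have SG : Summable (fun i => 2 * (‖(f : ∀ _ : Z, ℂ) i‖ ^ q + ‖(g : ∀ _ : Z, ℂ) i‖ ^ q)) :=
    (Sf.add Sg).mul_left 2
  have SF : Summable (fun i =>
      ‖(f : ∀ _ : Z, ℂ) i + (g : ∀ _ : Z, ℂ) i‖ ^ q
        + ‖(f : ∀ _ : Z, ℂ) i - (g : ∀ _ : Z, ℂ) i‖ ^ q) := Sfg.add Sfg'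
  have hLHS : ‖f + g‖ ^ q + ‖f - g‖ ^ q
      = ∑' i, (‖(f : ∀ _ : Z, ℂ) i + (g : ∀ _ : Z, ℂ) i‖ ^ q
        + ‖(f : ∀ _ : Z, ℂ) i - (g : ∀ _ : Z, ℂ) i‖ ^ q) := by
    rw [lp.norm_rpow_eq_tsum hq0 (f + g), lp.norm_rpow_eq_tsum hq0 (f - g)]
    simp only [lp.coeFn_add, lp.coeFn_sub, Pi.add_apply, Pi.sub_apply]
    exact (Summable.tsum_add Sfg Sfg').symm
  have hRHS : 2 * ‖f‖ ^ q + 2 * ‖g‖ ^ q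
      = ∑' i, (2 * (‖(f : ∀ _ : Z, ℂ) i‖ ^ q + ‖(g : ∀ _ : Z, ℂ) i‖ ^ q)) := by
    rw [lp.norm_rpow_eq_tsum hq0 f, lp.norm_rpow_eq_tsum hq0 g, tsum_mul_left,
      Summable.tsum_add Sf Sg]
    ring
  rw [hLHS, hRHS]
  constructor
  · intro heq i
    by_contra hcon
    push_neg at hcon
    obtain ⟨hfi, hgi⟩ := hcon
    rcases lt_or_gt_of_ne hq2 with hlt | hgt
    · have := Summable.tsum_lt_tsum (i := i)
        (fun j => lamperti_le hq0 hlt.le _ _) (lamperti_lt hq0 hlt hfi hgi) SF SG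
      rw [heq] at this
      exact lt_irrefl _ this
    · have := Summable.tsum_lt_tsum (i := i)
        (fun j => lamperti_ge hgt.le _ _) (lamperti_gt hgt hfi hgi) SG SF
      rw [heq] at this
      exact lt_irrefl _ this
  · intro hD
    apply tsum_congr
    intro i
    rcases hD i with h | h <;> rw [h] <;>
      simp [Real.zero_rpow hq0.ne', norm_neg] <;> ring
end lplemmas

section mainlemmas

variable {X Y : Type*} {p : ℝ≥0∞} [Fact (1 ≤ p)]

lemma coord_congr {Z : Type*} {f g : lp (fun _ : Z => ℂ) p} (h : f = g) (i : Z) :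
    (f : ∀ _ : Z, ℂ) i = (g : ∀ _ : Z, ℂ) i := by rw [h]

/-- Disjointness of supports is preserved by surjective linear isometries. -/
lemma disjoint_map (hp : p ≠ ∞) (hp2 : p ≠ 2)
    (U : lp (fun _ : X => ℂ) p ≃ₗᵢ[ℂ] lp (fun _ : Y => ℂ) p)
    {f g : lp (fun _ : X => ℂ) p}
    (h : ∀ i, (f : ∀ _ : X, ℂ) i = 0 ∨ (g : ∀ _ : X, ℂ) i = 0) :
    ∀ j, (U f : ∀ _ : Y, ℂ) j = 0 ∨ (U g : ∀ _ : Y, ℂ) j = 0 := by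
  apply (disjoint_iff_norm hp hp2 (U f) (U g)).mp
  have heq := (disjoint_iff_norm hp hp2 f g).mpr h
  rw [← map_add, ← map_sub, U.norm_map, U.norm_map, U.norm_map, U.norm_map]
  exact heq

/-- Main support lemma: `U δ_x` is supported at a single point, with unimodular value. -/
lemma support_lemma (hp : p ≠ ∞) (hp2 : p ≠ 2)
    (U : lp (fun _ : X => ℂ) p ≃ₗᵢ[ℂ] lp (fun _ : Y => ℂ) p) (x : X) :
    ∃ y : Y, (U (delta p x) : ∀ _ : Y, ℂ) y ≠ 0 ∧
      (∀ y' : Y, y' ≠ y → (U (delta p x) : ∀ _ : Y, ℂ) y' = 0) ∧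
      ‖(U (delta p x) : ∀ _ : Y, ℂ) y‖ = 1 := by
  classical
  set f := U (delta p x) with hf
  have hnf : ‖f‖ = 1 := by rw [hf, U.norm_map]; exact norm_delta hp x
  -- existence of a support point
  have hex : ∃ y : Y, (f : ∀ _ : Y, ℂ) y ≠ 0 := by
    by_contra hcon
    push_neg at hcon
    have : f = 0 := lp.ext (funext fun i => by simp [hcon i])
    rw [this] at hnf
    simp at hnf
  obtain ⟨y₀, hy₀⟩ := hex
  -- uniqueness of the support point
  have huniq : ∀ y' : Y, y' ≠ y₀ → (f : ∀ _ : Y, ℂ) y' = 0 := by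
    intro y' hy'
    by_contra hcon
    set f₁ : lp (fun _ : Y => ℂ) p := lp.single p y₀ ((f : ∀ _ : Y, ℂ) y₀) with hf₁
    set f₂ : lp (fun _ : Y => ℂ) p := f - f₁ with hf₂
    have hD : ∀ i, (f₁ : ∀ _ : Y, ℂ) i = 0 ∨ (f₂ : ∀ _ : Y, ℂ) i = 0 := by
      intro i
      by_cases hi : i = y₀
      · right
        subst hi
        simp [hf₂, hf₁, lp.single_apply_self]
      · left
        exact lp.single_apply_ne p y₀ _ hi
    have hsum : f₁ + f₂ = f := add_sub_cancel f₁ f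
    have hξD := disjoint_map hp hp2 U.symm hD
    have hξsum : U.symm f₁ + U.symm f₂ = delta p x := by
      rw [← map_add, hsum, hf, U.symm_apply_apply]
    have hkey : ∀ i : X, i ≠ x →
        (U.symm f₁ : ∀ _ : X, ℂ) i = 0 ∧ (U.symm f₂ : ∀ _ : X, ℂ) i = 0 := by
      intro i hi
      have hzero : (U.symm f₁ : ∀ _ : X, ℂ) i + (U.symm f₂ : ∀ _ : X, ℂ) i = 0 := by
        have := coord_congr hξsum i
        simpa [delta_apply_ne_aux p hi] using this
      rcases hξD i with h1 | h1
      · exact ⟨h1, by linear_combination (norm := ring_nf) hzero - h1⟩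
      · exact ⟨by linear_combination (norm := ring_nf) hzero - h1, h1⟩
    rcases hξD x with h1 | h1
    · -- ξ₁ = 0, so f₁ = 0, contradicting f y₀ ≠ 0
      have hz : U.symm f₁ = 0 := by
        apply lp.ext
        funext i
        by_cases hi : i = x
        · subst hi; simpa using h1
        · simpa using (hkey i hi).1
      have : f₁ = 0 := by
        have := congrArg U hz
        rwa [U.apply_symm_apply, map_zero] at this
      apply hy₀
      have := coord_congr this y₀
      simpa [hf₁, lp.single_apply_self] using this
    · -- ξ₂ = 0, so f₂ = 0, contradicting f y' ≠ 0
      have hz : U.symm f₂ = 0 := by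
        apply lp.ext
        funext i
        by_cases hi : i = x
        · subst hi; simpa using h1
        · simpa using (hkey i hi).2
      have hf₂0 : f₂ = 0 := by
        have := congrArg U hz
        rwa [U.apply_symm_apply, map_zero] at this
      apply hcon
      have := coord_congr hf₂0 y'
      simp only [hf₂, hf₁, lp.coeFn_sub, Pi.sub_apply, lp.coeFn_zero, Pi.zero_apply] at this
      rwa [lp.single_apply_ne p y₀ _ hy', sub_zero] at this
  -- norm of the value
  refine ⟨y₀, hy₀, huniq, ?_⟩
  have hsingle : f = lp.single p y₀ ((f : ∀ _ : Y, ℂ) y₀) := by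
    apply lp.ext
    funext i
    by_cases hi : i = y₀
    · subst hi; rw [lp.single_apply_self]
    · rw [lp.single_apply_ne p y₀ _ hi]; exact huniq i hi
  have := lp.norm_single (E := fun _ : Y => ℂ) (lt_of_lt_of_le zero_lt_one (Fact.out : 1 ≤ p)) y₀ ((f : ∀ _ : Y, ℂ) y₀)
  rw [← hsingle, hnf] at this
  exact this.symm

/-- Transfer of support through the inverse isometry. -/
lemma swap_lemma (hp : p ≠ ∞) (hp2 : p ≠ 2)
    (U : lp (fun _ : X => ℂ) p ≃ₗᵢ[ℂ] lp (fun _ : Y => ℂ) p) {x : X} {y : Y}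
    (h : (U (delta p x) : ∀ _ : Y, ℂ) y ≠ 0) :
    (U.symm (delta p y) : ∀ _ : X, ℂ) x ≠ 0 := by
  classical
  obtain ⟨y₀, hy₀, huniq, -⟩ := support_lemma hp hp2 U x
  have hyy₀ : y = y₀ := by
    by_contra hne
    exact h (huniq y hne)
  subst hyy₀
  set c := (U (delta p x) : ∀ _ : Y, ℂ) y with hc
  have hsingle : U (delta p x) = lp.single p y c := by
    apply lp.ext
    funext i
    by_cases hi : i = y
    · subst hi; rw [lp.single_apply_self]
    · rw [lp.single_apply_ne p y _ hi]; exact huniq i hi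
  have hdelta : (lp.single p y c : lp (fun _ : Y => ℂ) p) = c • delta p y := by
    letI := Classical.decEq Y
    apply lp.ext
    funext i
    by_cases hi : i = y
    · subst hi
      simp only [lp.single_apply_self, lp.coeFn_smul, Pi.smul_apply, smul_eq_mul]
      rw [delta_apply_self_aux]
      ring
    · simp only [lp.coeFn_smul, Pi.smul_apply, smul_eq_mul]
      rw [lp.single_apply_ne p y _ hi, delta_apply_ne_aux p hi]
      ring
  have heq : delta p x = c • U.symm (delta p y) := by
    have := congrArg U.symm hsingle
    rwa [U.symm_apply_apply, hdelta, map_smul] at this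
  intro hzero
  have := coord_congr heq x
  rw [delta_apply_self_aux] at this
  simp only [lp.coeFn_smul, Pi.smul_apply, hzero, smul_zero] at this
  exact one_ne_zero this

end mainlemmas


/-- For `p ∈ [1,∞)`, `p ≠ 2`, and a surjective linear isometry `U : ℓ^p(X) → ℓ^p(Y)` of
countable sets, for every `x ∈ X` there is a unique `y ∈ Y` at which `U δ_x` is supported,
and the map `x ↦ y` is a bijection `X → Y` with `|(U δ_x)(y)| = 1`. -/
theorem lamperti_support_bijection {X Y : Type*} [Countable X] [Countable Y]
    (p : ℝ≥0∞) [Fact (1 ≤ p)] (hp : p ≠ ∞) (hp2 : p ≠ 2)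
    (U : lp (fun _ : X => ℂ) p ≃ₗᵢ[ℂ] lp (fun _ : Y => ℂ) p) :
    (∀ x : X, ∃! y : Y, (U (delta p x)) y ≠ 0) ∧
      ∃ g : X ≃ Y, ∀ x : X, ‖(U (delta p x)) (g x)‖ = 1 ∧
        ∀ y : Y, y ≠ g x → (U (delta p x)) y = 0 := by
  have hsup := fun x : X => support_lemma hp hp2 U x
  have hsup' := fun y : Y => support_lemma hp hp2 U.symm y
  choose G hG1 hG2 hG3 using hsup
  choose H hH1 hH2 hH3 using hsup'
  have hleft : ∀ x : X, H (G x) = x := by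
    intro x
    by_contra hne
    have h2 := swap_lemma hp hp2 U (hG1 x)
    exact h2 (hH2 (G x) x (fun h => hne h.symm))
  have hright : ∀ y : Y, G (H y) = y := by
    intro y
    by_contra hne
    have h2 := swap_lemma hp hp2 U.symm (hH1 y)
    rw [LinearIsometryEquiv.symm_symm] at h2
    exact h2 (hG2 (H y) y (fun h => hne h.symm))
  refine ⟨fun x => ⟨G x, hG1 x, fun y hy => ?_⟩,
    ⟨⟨G, H, hleft, hright⟩, fun x => ⟨hG3 x, fun y hy => hG2 x y hy⟩⟩⟩
  by_contra hne
  exact hy (hG2 x y hne)
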